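/- For any graph G with degeneracy d and any list assignment L with |L(v)| ≥ d + 2 for every vertex v, any two proper L-colourings of G can be transformed into one another by recolouring one vertex at a time (using colours from its list), maintaining a proper L-colouring throughout. -/

import Mathlib

/-- `G` is `d`-degenerate: every (induced sub)finset has a vertex with at most `d`
neighbours inside it. -/
def Degenerate {V : Type} [DecidableEq V] (G : SimpleGraph V) [DecidableRel G.Adj] (d : ℕ) : Prop :=
  ∀ S : Finset V, S.Nonempty → ∃ v ∈ S, (S.filter (G.Adj v)).card ≤ d

/-- `c` is a proper `L`-list-colouring of `G`. -/
def IsProperListColoring {V : Type} (G : SimpleGraph V) (L : V → Finset ℕ) (c : V → ℕ) : Prop :=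
  (∀ v : V, c v ∈ L v) ∧ ∀ ⦃u v : V⦄, G.Adj u v → c u ≠ c v

/-- A single-vertex list-recolouring step. -/
def ListRecolStep {V : Type} (G : SimpleGraph V) (L : V → Finset ℕ) (c c' : V → ℕ) : Prop :=
  IsProperListColoring G L c ∧ IsProperListColoring G L c' ∧
    ∃ v : V, c v ≠ c' v ∧ ∀ w : V, w ≠ v → c w = c' w

/-!
Induction on the number of vertices. Pick a vertex `v` with at most `d` neighbours; by induction
any two colourings of `G - v` are joined by a recolouring sequence, and we follow it in `G`.
A step that recolours a neighbour `w` of `v` may clash with the colour of `v`; in that case `v`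
first moves to a colour of its list avoiding its at most `d` neighbours and the new colour of
`w`, which exists since `|L v| ≥ d + 2`. At the end `v` is recoloured to its target colour,
which is free because the target colouring is proper.
-/

open Finset Function Relation

theorem Degenerate.comap {V W : Type} [DecidableEq V] [DecidableEq W] {G : SimpleGraph V}
    [DecidableRel G.Adj] {d : ℕ} (hG : Degenerate G d) (f : W ↪ V) :
    Degenerate (G.comap f) d := by
  intro S hS
  obtain ⟨_, hu, hdeg⟩ := hG (S.map f) (hS.map)
  obtain ⟨u, huS, rfl⟩ := mem_map.mp hu
  refine ⟨u, huS, ?_⟩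
  rwa [filter_map, card_map] at hdeg

theorem Finset.exists_mem_ne_forall_ne_of_card_le {ι : Type} (s : Finset ℕ) (N : Finset ι)
    (f : ι → ℕ) (a : ℕ) {d : ℕ} (hN : #N ≤ d) (hs : d + 2 ≤ #s) :
    ∃ b ∈ s, b ≠ a ∧ ∀ u ∈ N, b ≠ f u := by
  have : #(insert a (N.image f)) < #s :=
    (card_insert_le _ _).trans_lt (by have := card_image_le (s := N) (f := f); omega)
  obtain ⟨b, hbs, hb⟩ := exists_mem_notMem_of_card_lt_card this
  simp only [mem_insert, mem_image, not_or, not_exists, not_and] at hb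
  exact ⟨b, hbs, hb.1, fun u hu h => hb.2 u hu h.symm⟩

section Recolouring

variable {V : Type} {G : SimpleGraph V} {L : V → Finset ℕ} {c c₁ : V → ℕ}

theorem IsProperListColoring.comap {W : Type} (hc : IsProperListColoring G L c) (f : W → V) :
    IsProperListColoring (G.comap f) (L ∘ f) (c ∘ f) :=
  ⟨fun w => hc.1 (f w), fun _ _ h => hc.2 h⟩

theorem IsProperListColoring.of_reflTransGen (hc : IsProperListColoring G L c)
    (h : ReflTransGen (ListRecolStep G L) c c₁) : IsProperListColoring G L c₁ := by
  induction h with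
  | refl => exact hc
  | tail _ hstep _ => exact hstep.2.1

variable [DecidableEq V]

theorem IsProperListColoring.update (hc : IsProperListColoring G L c) {v : V} {a : ℕ}
    (ha : a ∈ L v) (hadj : ∀ u, G.Adj v u → a ≠ c u) :
    IsProperListColoring G L (Function.update c v a) := by
  refine ⟨fun w => ?_, fun u w huw => ?_⟩
  · rcases eq_or_ne w v with rfl | hw
    · simpa using ha
    · simpa [hw] using hc.1 w
  · rcases eq_or_ne u v with rfl | hu
    · simpa [(G.ne_of_adj huw).symm] using hadj w huw
    · rcases eq_or_ne w v with rfl | hw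
      · simpa [hu] using (hadj u huw.symm).symm
      · simpa [hu, hw] using hc.2 huw

theorem IsProperListColoring.reflTransGen_update (hc : IsProperListColoring G L c) {v : V}
    {a : ℕ} (ha : a ∈ L v) (hadj : ∀ u, G.Adj v u → a ≠ c u) :
    ReflTransGen (ListRecolStep G L) c (Function.update c v a) := by
  rcases eq_or_ne a (c v) with rfl | hne
  · rw [update_eq_self]
  · refine .single ⟨hc, hc.update ha hadj, v, by simpa using hne.symm, fun w hw => ?_⟩
    rw [update_of_ne hw]

theorem IsProperListColoring.exists_reflTransGen_update_of_degree_le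
    (hc : IsProperListColoring G L c) {v : V} [Fintype (G.neighborSet v)] {d : ℕ}
    (hv : G.degree v ≤ d) (hLv : d + 2 ≤ #(L v)) {w : V} {a : ℕ} (ha : a ∈ L w)
    (hadj : ∀ u, G.Adj w u → u ≠ v → a ≠ c u) :
    ∃ c₂, ReflTransGen (ListRecolStep G L) c c₂ ∧ c₂ w = a ∧
      ∀ u, u ≠ v → u ≠ w → c₂ u = c u := by
  obtain ⟨b, hbL, hba, hbadj⟩ :=
    exists_mem_ne_forall_ne_of_card_le (L v) (G.neighborFinset v) c a
      ((G.card_neighborFinset_eq_degree v).trans_le hv) hLv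
  have hb : ∀ u, G.Adj v u → b ≠ c u := fun u hu => hbadj u ((G.mem_neighborFinset v u).2 hu)
  have ha' : ∀ u, G.Adj w u → a ≠ Function.update c v b u := by
    intro u hu
    rcases eq_or_ne u v with rfl | huv
    · simpa using hba.symm
    · simpa [huv] using hadj u hu huv
  refine ⟨Function.update (Function.update c v b) w a,
    (hc.reflTransGen_update hbL hb).trans ((hc.update hbL hb).reflTransGen_update ha ha'),
    by simp, fun u huv huw => by simp [huv, huw]⟩

end Recolouring

section DeleteVertex

variable {V : Type} [DecidableEq V] {G : SimpleGraph V} {L : V → Finset ℕ} {v : V}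
  [Fintype (G.neighborSet v)] {d : ℕ}

theorem ListRecolStep.exists_lift_comap_ne (hv : G.degree v ≤ d) (hLv : d + 2 ≤ #(L v))
    {c : V → ℕ} (hc : IsProperListColoring G L c) {b : {w // w ≠ v} → ℕ}
    (h : ListRecolStep (G.comap Subtype.val) (L ∘ Subtype.val) (c ∘ Subtype.val) b) :
    ∃ c₂, ReflTransGen (ListRecolStep G L) c c₂ ∧ c₂ ∘ Subtype.val = b := by
  obtain ⟨-, hb, w, -, hbw⟩ := h
  obtain ⟨c₂, hcc₂, hc₂w, hc₂⟩ :=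
    hc.exists_reflTransGen_update_of_degree_le hv hLv (w := w) (hb.1 w) fun u hwu huv => by
      have hne : (⟨u, huv⟩ : {w // w ≠ v}) ≠ w := fun h =>
        G.ne_of_adj hwu (congrArg Subtype.val h.symm)
      have := hb.2 (show (G.comap Subtype.val).Adj w ⟨u, huv⟩ from hwu)
      rwa [← hbw ⟨u, huv⟩ hne] at this
  refine ⟨c₂, hcc₂, funext fun u => ?_⟩
  rcases eq_or_ne u w with rfl | huw
  · exact hc₂w
  · exact (hc₂ u u.2 (Subtype.val_injective.ne huw)).trans (hbw u huw)

theorem ListRecolStep.exists_lift_of_reflTransGen_comap_ne (hv : G.degree v ≤ d)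
    (hLv : d + 2 ≤ #(L v)) {b b' : {w // w ≠ v} → ℕ}
    (h : ReflTransGen (ListRecolStep (G.comap Subtype.val) (L ∘ Subtype.val)) b b')
    {c : V → ℕ} (hc : IsProperListColoring G L c) (hcb : c ∘ Subtype.val = b) :
    ∃ c₂, ReflTransGen (ListRecolStep G L) c c₂ ∧ c₂ ∘ Subtype.val = b' := by
  induction h using ReflTransGen.head_induction_on generalizing c with
  | refl => exact ⟨c, .refl, hcb⟩
  | head hstep _ ih =>
    subst hcb
    obtain ⟨c₁, hcc₁, hc₁⟩ := hstep.exists_lift_comap_ne hv hLv hc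
    obtain ⟨c₂, hc₁c₂, hc₂⟩ := ih (hc.of_reflTransGen hcc₁) hc₁
    exact ⟨c₂, hcc₁.trans hc₁c₂, hc₂⟩

theorem ListRecolStep.reflTransGen_of_reflTransGen_comap_ne (hv : G.degree v ≤ d)
    (hLv : d + 2 ≤ #(L v)) {c c' : V → ℕ} (hc : IsProperListColoring G L c)
    (hc' : IsProperListColoring G L c')
    (h : ReflTransGen
      (ListRecolStep (G.comap (Subtype.val : {w // w ≠ v} → V)) (L ∘ Subtype.val))
      (c ∘ Subtype.val) (c' ∘ Subtype.val)) :
    ReflTransGen (ListRecolStep G L) c c' := by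
  obtain ⟨c₂, hcc₂, hc₂⟩ := exists_lift_of_reflTransGen_comap_ne hv hLv h hc rfl
  have hc₂c' : ∀ u, u ≠ v → c₂ u = c' u := fun u hu => congrFun hc₂ ⟨u, hu⟩
  have hupdate : Function.update c₂ v (c' v) = c' := by
    funext u
    rcases eq_or_ne u v with rfl | hu
    · simp
    · simp [hu, hc₂c' u hu]
  rw [← hupdate]
  refine hcc₂.trans ((hc.of_reflTransGen hcc₂).reflTransGen_update (hc'.1 v) fun u hvu => ?_)
  rw [hc₂c' u (G.ne_of_adj hvu).symm]
  exact hc'.2 hvu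

end DeleteVertex

/-- If `G` has degeneracy at most `d` and every list has at least `d + 2` colours, then
any two proper `L`-colourings are connected by single-vertex recolourings. -/
theorem list_degeneracy_mixing {V : Type} [Fintype V] [DecidableEq V]
    (G : SimpleGraph V) [DecidableRel G.Adj] (d : ℕ) (hdeg : Degenerate G d)
    (L : V → Finset ℕ) (hL : ∀ v : V, d + 2 ≤ (L v).card)
    (c c' : V → ℕ) (hc : IsProperListColoring G L c) (hc' : IsProperListColoring G L c') :
    Relation.ReflTransGen (ListRecolStep G L) c c' := by
  induction hn : Fintype.card V generalizing V with
  | zero =>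
    have : IsEmpty V := Fintype.card_eq_zero_iff.mp hn
    rw [Subsingleton.elim c c']
  | succ n ih =>
    have : Nonempty V := Fintype.card_pos_iff.mp (by omega)
    obtain ⟨v, -, hvS⟩ := hdeg univ univ_nonempty
    have hv : G.degree v ≤ d := by
      rw [← G.card_neighborFinset_eq_degree, G.neighborFinset_eq_filter]
      exact hvS
    refine ListRecolStep.reflTransGen_of_reflTransGen_comap_ne hv (hL v) hc hc' ?_
    refine ih _ (hdeg.comap (.subtype _)) (L ∘ Subtype.val) (fun w => hL w.1) _ _
      (hc.comap _) (hc'.comap _) ?_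
    rw [Fintype.card_subtype_compl, hn, Fintype.card_unique, Nat.add_sub_cancel]
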